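/- arXiv:2012.04338 — 3 statements merged into one kernel-verified Lean document; each statement's English description precedes it below -/
import Mathlib

section
/- Let S be a positively directed Cu~-semigroup (an ordered commutative monoid satisfying: every increasing sequence has a supremum; for every x there exists p with x + p ≥ 0). If the set S_max of maximal elements of S is nonempty, then S_max is closed under addition. -/
/-- The set of maximal elements of an ordered monoid. -/
def maxSet (S : Type*) [Preorder S] : Set S := {x | ∀ y, x ≤ y → y = x}

theorem add_mem_maxSet_of_nonneg_add {S : Type*} [AddCommMonoid S] [PartialOrder S]
    [IsOrderedAddMonoid S] {y : S} (hy : y ∈ maxSet S) {z p : S} (hzp : 0 ≤ z + p) :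
    y + z ∈ maxSet S := by
  intro w hw
  have hwp : w + p = y := hy _ <| calc
    y ≤ y + (z + p) := le_add_of_nonneg_right hzp
    _ = y + z + p := (add_assoc y z p).symm
    _ ≤ w + p := add_le_add_left hw p
  refine le_antisymm ?_ hw
  calc w ≤ w + (z + p) := le_add_of_nonneg_right hzp
    _ = w + p + z := by rw [add_comm z p, add_assoc]
    _ = y + z := by rw [hwp]

theorem maxSet_add_closed_general {S : Type*} [AddCommMonoid S] [PartialOrder S] [IsOrderedAddMonoid S]
    (hdir : ∀ x : S, ∃ p : S, 0 ≤ x + p) :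
    ∀ y ∈ maxSet S, ∀ z ∈ maxSet S, y + z ∈ maxSet S := by
  intro y hy z _
  obtain ⟨p, hzp⟩ := hdir z
  exact add_mem_maxSet_of_nonneg_add hy hzp

/-- In a positively directed `Cu~`-semigroup (every increasing sequence has a supremum and
for every `x` there is `p` with `x + p ≥ 0`), if the set of maximal elements is nonempty
then it is closed under addition. -/
theorem maxSet_add_closed {S : Type*} [AddCommMonoid S] [PartialOrder S] [IsOrderedAddMonoid S]
    (hO1 : ∀ z : ℕ → S, Monotone z → ∃ s : S, IsLUB (Set.range z) s)
    (hdir : ∀ x : S, ∃ p : S, 0 ≤ x + p)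
    (hne : (maxSet S).Nonempty) :
    ∀ y ∈ maxSet S, ∀ z ∈ maxSet S, y + z ∈ maxSet S :=
  maxSet_add_closed_general hdir
end

section
/- Let S be a positively directed ordered commutative monoid whose set of maximal elements S_max is nonempty. Then S_max, with the induced addition, is an abelian group whose neutral element e is the unique positive element of S_max; moreover, for z ∈ S_max and p ∈ S with z + p ≥ 0, the inverse of z in S_max is 2p + z. -/
/-! An element `x` with `0 ≤ x + x'` for some `x'` sends maximal elements to maximal elements
under translation; in a positively directed monoid every `x` has such an `x'`, so `maxSet S` is
closed under adding arbitrary elements. A maximal element absorbs every positive element, so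
two positive maximal elements `e, f` satisfy `e = e + f = f`; hence `e` is unique, it is neutral
on `maxSet S`, and `z + (p + p + z) = (z + p) + (z + p)` is a positive maximal element, i.e. `e`. -/

section maxSet

variable {S : Type*} [AddCommMonoid S] [PartialOrder S] [IsOrderedAddMonoid S] {x y : S}

theorem add_eq_self_of_mem_maxSet {c : S} (hx : x ∈ maxSet S) (hc : 0 ≤ c) : x + c = x :=
  hx _ (le_add_of_nonneg_right hc)

theorem eq_of_mem_maxSet_of_nonneg (hx : x ∈ maxSet S) (hy : y ∈ maxSet S) (hx0 : 0 ≤ x)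
    (hy0 : 0 ≤ y) : x = y :=
  calc x = x + y := (add_eq_self_of_mem_maxSet hx hy0).symm
    _ = y + x := add_comm x y
    _ = y := add_eq_self_of_mem_maxSet hy hx0

theorem add_mem_maxSet_of_nonneg_add_s3 {x' : S} (hy : y ∈ maxSet S) (h : 0 ≤ x + x') :
    x + y ∈ maxSet S := by
  intro w hw
  have hx'w : x' + w = y :=
    hy _ <| calc y ≤ (x + x') + y := le_add_of_nonneg_left h
      _ = x' + (x + y) := by abel
      _ ≤ x' + w := add_le_add_right hw x'
  refine le_antisymm ?_ hw
  calc w ≤ (x + x') + w := le_add_of_nonneg_left h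
    _ = x + (x' + w) := by abel
    _ = x + y := by rw [hx'w]

theorem add_mem_maxSet (hdir : ∀ x : S, ∃ p : S, 0 ≤ x + p) (hy : y ∈ maxSet S) :
    x + y ∈ maxSet S :=
  let ⟨_, hp⟩ := hdir x
  add_mem_maxSet_of_nonneg_add_s3 hy hp

end maxSet

/-- In a positively directed ordered commutative monoid whose set of maximal elements is
nonempty, the maximal elements form an abelian group under the induced addition, whose
neutral element `e` is the unique positive element of `maxSet S`; for `z` maximal and
`p` with `z + p ≥ 0`, the inverse of `z` is `2p + z`. -/
theorem maxSet_is_abelian_group {S : Type*} [AddCommMonoid S] [PartialOrder S] [IsOrderedAddMonoid S]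
    (hdir : ∀ x : S, ∃ p : S, 0 ≤ x + p)
    (hne : (maxSet S).Nonempty) :
    ∃ e ∈ maxSet S, 0 ≤ e ∧
      (∀ x ∈ maxSet S, 0 ≤ x → x = e) ∧
      (∀ x ∈ maxSet S, ∀ y ∈ maxSet S, x + y ∈ maxSet S) ∧
      (∀ x ∈ maxSet S, x + e = x) ∧
      (∀ z ∈ maxSet S, ∀ p : S, 0 ≤ z + p →
        (p + p + z ∈ maxSet S ∧ z + (p + p + z) = e)) := by
  obtain ⟨m, hm⟩ := hne
  obtain ⟨p, hp⟩ := hdir m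
  have he : m + p ∈ maxSet S := add_comm p m ▸ add_mem_maxSet hdir hm
  refine ⟨m + p, he, hp, fun x hx hx0 => eq_of_mem_maxSet_of_nonneg hx he hx0 hp,
    fun _ _ _ hy => add_mem_maxSet hdir hy, fun x hx => add_eq_self_of_mem_maxSet hx hp, ?_⟩
  intro z hz q hq
  have hsum : z + (q + q + z) = (z + q) + (z + q) := by abel
  have hsum_max : (z + q) + (z + q) ∈ maxSet S :=
    add_mem_maxSet hdir (add_comm q z ▸ add_mem_maxSet hdir hz)
  exact ⟨add_mem_maxSet hdir hz,
    hsum ▸ eq_of_mem_maxSet_of_nonneg hsum_max he (add_nonneg hq hq) hp⟩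
end

section
/- Let S, T be positively directed ordered commutative monoids with nonempty sets of maximal elements S_max, T_max, and let α : S → T be an additive, order-preserving map. Then the map α_max : S_max → T_max defined by α_max(s) = α(s) + e_{T_max} (where e_{T_max} is the neutral element of the group T_max) is a well-defined group homomorphism. -/
/-!
If `e ∈ T_max` is nonnegative, then `u + e = e` for every `u ≥ 0`; in particular `e + e = e`,
which makes `s ↦ α s + e` additive. Moreover `t + e` is maximal as soon as `0 ≤ t + q` for some
`q`: if `y ≥ t + e`, then `y + (q + e) ≥ (t + q) + e + e = e`, so `y + (q + e) = e`, and hence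
`t + e = y + ((t + q) + e) = y + e ≥ y`. Directedness of `S` provides such a `q` for every
`s`, and `α` carries `0 ≤ s + q` to `0 ≤ α s + α q`.
-/

section OrderedAddCommMonoid

variable {M : Type*} [AddCommMonoid M] [PartialOrder M] [IsOrderedAddMonoid M]

theorem add_eq_of_nonneg_of_mem_maxSet {u e : M} (he : e ∈ maxSet M) (hu : 0 ≤ u) :
    u + e = e :=
  he _ (le_add_of_nonneg_left hu)

theorem add_self_of_mem_maxSet {e : M} (he : e ∈ maxSet M) (hepos : 0 ≤ e) : e + e = e :=
  add_eq_of_nonneg_of_mem_maxSet he hepos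

theorem add_mem_maxSet_of_nonneg_add_s5 {t q e : M} (hq : 0 ≤ t + q) (he : e ∈ maxSet M)
    (hepos : 0 ≤ e) : t + e ∈ maxSet M := by
  intro y hy
  have hye : y + (q + e) = e := he _ <| calc
    e = t + q + e + e := by
      rw [add_eq_of_nonneg_of_mem_maxSet he hq, add_self_of_mem_maxSet he hepos]
    _ = t + e + (q + e) := by abel
    _ ≤ y + (q + e) := add_le_add_left hy _
  have hte : t + e = y + e := calc
    t + e = t + (y + (q + e)) := by rw [hye]
    _ = y + (t + q + e) := by abel
    _ = y + e := by rw [add_eq_of_nonneg_of_mem_maxSet he hq]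
  exact le_antisymm (hte ▸ le_add_of_nonneg_right hepos) hy

end OrderedAddCommMonoid

theorem maxSet_map_is_group_hom_general {S T : Type*} [AddCommMonoid S] [PartialOrder S]
    [IsOrderedAddMonoid S]
    [AddCommMonoid T] [PartialOrder T] [IsOrderedAddMonoid T]
    (hdirS : ∀ x : S, ∃ p : S, 0 ≤ x + p)
    (α : S → T) (hadd : ∀ x y : S, α (x + y) = α x + α y) (hzero : α 0 = 0)
    (hmono : Monotone α)
    (e : T) (he : e ∈ maxSet T) (hepos : 0 ≤ e) :
    (∀ s ∈ maxSet S, α s + e ∈ maxSet T) ∧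
    (∀ s₁ ∈ maxSet S, ∀ s₂ ∈ maxSet S,
      α (s₁ + s₂) + e = (α s₁ + e) + (α s₂ + e)) := by
  refine ⟨fun s _ => ?_, fun s₁ _ s₂ _ => ?_⟩
  · obtain ⟨q, hq⟩ := hdirS s
    have hαq : 0 ≤ α s + α q := by simpa only [hzero, hadd] using hmono hq
    exact add_mem_maxSet_of_nonneg_add_s5 hαq he hepos
  · rw [hadd, add_add_add_comm, add_self_of_mem_maxSet he hepos]

/-- Let `S`, `T` be positively directed ordered commutative monoids with nonempty sets of
maximal elements, and `α : S → T` an additive order-preserving map.  Then the map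
`s ↦ α s + e`, where `e` is the neutral element of the group `T_max` (its unique positive
element), is a well-defined group homomorphism `S_max → T_max`: it takes values in
`T_max` and is additive. -/
theorem maxSet_map_is_group_hom {S T : Type*} [AddCommMonoid S] [PartialOrder S]
    [IsOrderedAddMonoid S]
    [AddCommMonoid T] [PartialOrder T] [IsOrderedAddMonoid T]
    (hdirS : ∀ x : S, ∃ p : S, 0 ≤ x + p)
    (hdirT : ∀ x : T, ∃ p : T, 0 ≤ x + p)
    (hneS : (maxSet S).Nonempty) (hneT : (maxSet T).Nonempty)
    (α : S → T) (hadd : ∀ x y : S, α (x + y) = α x + α y) (hzero : α 0 = 0)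
    (hmono : Monotone α)
    (e : T) (he : e ∈ maxSet T) (hepos : 0 ≤ e) :
    (∀ s ∈ maxSet S, α s + e ∈ maxSet T) ∧
    (∀ s₁ ∈ maxSet S, ∀ s₂ ∈ maxSet S,
      α (s₁ + s₂) + e = (α s₁ + e) + (α s₂ + e)) :=
  maxSet_map_is_group_hom_general hdirS α hadd hzero hmono e he hepos
end
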